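/- The protocol P^∅ is an intersection protocol (satisfies Validity, Safety, and Liveness) and is lexicographically optimal with respect to γ_∅(F) for each adversary model F ∈ {NF, CR, SO}. -/

import Mathlib

open scoped Classical

noncomputable section

namespace Inter

/-- Actions available to each agent. -/
inductive Act where
  | go
  | noop
deriving DecidableEq

/-- A move through the intersection: an incoming lane paired with an outgoing lane. -/
abbrev Move (kin kout : ℕ) := Fin kin × Fin kout

/-- An adversary: a conflict-free arrival schedule, a transmission environment and
transmitter/receiver failure functions. -/
structure Adversary (kin kout : ℕ) where
  arrive : ℕ → ℕ × Fin kin × Fin kout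
  conflictFree : ∀ i j : ℕ, i ≠ j → (arrive i).1 = (arrive j).1 →
    (arrive i).2.1 ≠ (arrive j).2.1
  T : Set ((Fin kin × ℕ) × (Fin kin × ℕ))
  T_front : ∀ l l' : Fin kin, ((l, 0), (l', 0)) ∈ T
  Ft : ℕ → ℕ → Bool
  Fr : ℕ → ℕ → Bool

/-- The lane component of a sensor reading: an incoming lane, ⊥ (not yet arrived),
or ⊤ (departed). -/
inductive LaneStatus (kin : ℕ) where
  | inLane (l : Fin kin)
  | notArrived
  | finished

/-- The minimal sensor reading: front, lane and intent. -/
structure Reading (kin kout : ℕ) where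
  front : Prop
  lane : LaneStatus kin
  intent : Fin kout

/-- Environment states record the adversary, the time, a queue for each incoming lane
and the set of departed agents. -/
structure EnvState (kin kout : ℕ) where
  adv : Adversary kin kout
  time : ℕ
  queue : Fin kin → List ℕ
  done : Set ℕ

/-- Local states: a memory state together with a sensor reading
(the minimal reading plus possibly extra sensor information). -/
abbrev LState (kin kout : ℕ) (Mem Extra : Type*) := Mem × Reading kin kout × Extra

/-- Global states: an environment state and local states for all agents. -/
abbrev GState (kin kout : ℕ) (Mem Extra : Type*) :=
  EnvState kin kout × (ℕ → LState kin kout Mem Extra)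

/-- A run. -/
abbrev Run (kin kout : ℕ) (Mem Extra : Type*) := ℕ → GState kin kout Mem Extra

/-- An action protocol maps each agent's local state to an action. -/
abbrev Prot (kin kout : ℕ) (Mem Extra : Type*) := ℕ → LState kin kout Mem Extra → Act

variable {kin kout : ℕ} {Mem Extra Msg : Type*}

/-- Agent `i` is at the front of some queue. -/
def isFront (e : EnvState kin kout) (i : ℕ) : Prop :=
  ∃ l : Fin kin, (e.queue l).head? = some i

/-- The (lane, position) of agent `i`, if it is in some queue. -/
def posAt (e : EnvState kin kout) (i : ℕ) : Option (Fin kin × ℕ) :=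
  if h : ∃ l : Fin kin, i ∈ e.queue l then some (h.choose, (e.queue h.choose).idxOf i)
  else none

/-- The intended departure lane of agent `i`, as given by the arrival schedule. -/
def intentOf (e : EnvState kin kout) (i : ℕ) : Fin kout := (e.adv.arrive i).2.2

/-- The move `(lane_i, intent_i)` of agent `i`, if it is in some queue. -/
def moveAt (e : EnvState kin kout) (i : ℕ) : Option (Move kin kout) :=
  (posAt e i).map (fun p => (p.1, intentOf e i))

/-- The minimal sensor reading of agent `i` in environment state `e`. -/
def minimalReading (e : EnvState kin kout) (i : ℕ) : Reading kin kout where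
  front := isFront e i
  lane :=
    if h : ∃ l : Fin kin, i ∈ e.queue l then LaneStatus.inLane h.choose
    else if i ∈ e.done then LaneStatus.finished else LaneStatus.notArrived
  intent := intentOf e i

/-- An information-exchange protocol: initial memories, extra sensor information,
a message function and a memory-update function. -/
structure IEP (kin kout : ℕ) (Mem Extra Msg : Type*) where
  initMem : ℕ → Mem
  extra : EnvState kin kout → ℕ → Extra
  msg : ℕ → LState kin kout Mem Extra → Act → Reading kin kout × Extra → Option Msg
  upd : ℕ → LState kin kout Mem Extra → Act → Set Msg → Mem

/-- One round of the system: agents act, queues are updated (dequeues for agents that go,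
enqueues for new arrivals), new sensor readings are taken, messages are broadcast and
received subject to the transmission environment and the failure functions, and memories
are updated. -/
def step (E : IEP kin kout Mem Extra Msg) (P : Prot kin kout Mem Extra)
    (g : GState kin kout Mem Extra) : GState kin kout Mem Extra :=
  let e := g.1
  let act : ℕ → Act := fun i => P i (g.2 i)
  let q' : Fin kin → List ℕ := fun l =>
    let q1 := match (e.queue l).head? with
      | some i => if act i = Act.go then (e.queue l).tail else e.queue l
      | none => e.queue l
    if h : ∃ i l', e.adv.arrive i = (e.time + 1, l, l') then q1 ++ [h.choose] else q1
  let done' : Set ℕ := e.done ∪ {i | isFront e i ∧ act i = Act.go}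
  let e' : EnvState kin kout := ⟨e.adv, e.time + 1, q', done'⟩
  let sens : ℕ → Reading kin kout × Extra := fun i => (minimalReading e' i, E.extra e' i)
  let rcv : ℕ → Set Msg := fun i =>
    if e.adv.Fr e.time i = true ∧ (posAt e' i).isSome = true then
      {m | ∃ j pj pi, E.msg j (g.2 j) (act j) (sens j) = some m ∧
            e.adv.Ft e.time j = true ∧
            posAt e' j = some pj ∧ posAt e' i = some pi ∧ (pj, pi) ∈ e.adv.T}
    else ∅
  (e', fun i => (E.upd i (g.2 i) (act i) (rcv i), sens i))

/-- An intersection context: an information-exchange protocol together with an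
adversary model. -/
structure Ctx (kin kout : ℕ) (Mem Extra Msg : Type*) where
  iep : IEP kin kout Mem Extra Msg
  adv : Set (Adversary kin kout)

/-- Initial global states: time 0, empty queues, no departed agents, an adversary
from the adversary model, and initial local states. -/
def Init (C : Ctx kin kout Mem Extra Msg) (g : GState kin kout Mem Extra) : Prop :=
  g.1.adv ∈ C.adv ∧ g.1.time = 0 ∧ (∀ l, g.1.queue l = []) ∧ g.1.done = ∅ ∧
  ∀ i, g.2 i = (C.iep.initMem i, minimalReading g.1 i, C.iep.extra g.1 i)

/-- The interpreted system `I_{γ,P}`: the set of runs of protocol `P` in context `γ`. -/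
def Runs (C : Ctx kin kout Mem Extra Msg) (P : Prot kin kout Mem Extra) :
    Set (Run kin kout Mem Extra) :=
  {r | Init C (r 0) ∧ ∀ m, r (m + 1) = step C.iep P (r m)}

/-- `front_i` holds at the point `(r,m)`. -/
def frontAt (r : Run kin kout Mem Extra) (m i : ℕ) : Prop := isFront (r m).1 i

/-- `going_i` abbreviates `front_i ∧ ◯¬front_i`. -/
def goingAt (r : Run kin kout Mem Extra) (m i : ℕ) : Prop :=
  frontAt r m i ∧ ¬ frontAt r (m + 1) i

/-- `GO(r,m)`: the set of agents that go through the intersection in round `m+1`. -/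
def GOs (r : Run kin kout Mem Extra) (m : ℕ) : Set ℕ := {i | goingAt r m i}

/-- Validity: an agent goes through the intersection only from the front of its queue. -/
def ValidityP (C : Ctx kin kout Mem Extra Msg) (P : Prot kin kout Mem Extra) : Prop :=
  ∀ r ∈ Runs C P, ∀ m i, goingAt r m i → frontAt r m i

/-- Safety: agents that go simultaneously have compatible moves. -/
def SafetyP (O : Move kin kout → Move kin kout → Prop)
    (C : Ctx kin kout Mem Extra Msg) (P : Prot kin kout Mem Extra) : Prop :=
  ∀ r ∈ Runs C P, ∀ m i j, i ≠ j → goingAt r m i → goingAt r m j →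
    ∀ mi mj, moveAt (r m).1 i = some mi → moveAt (r m).1 j = some mj → O mi mj

/-- Liveness: every agent at the front of a queue eventually goes. -/
def LivenessP (C : Ctx kin kout Mem Extra Msg) (P : Prot kin kout Mem Extra) : Prop :=
  ∀ r ∈ Runs C P, ∀ m i, frontAt r m i → ∃ m' ≥ m, goingAt r m' i

/-- An intersection protocol: an action protocol satisfying Validity, Safety and Liveness. -/
def IsIntersectionProtocol (O : Move kin kout → Move kin kout → Prop)
    (C : Ctx kin kout Mem Extra Msg) (P : Prot kin kout Mem Extra) : Prop :=
  ValidityP C P ∧ SafetyP O C P ∧ LivenessP C P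

/-- `safe-to-go_i` at `(r,m)`: `i` is at the front of its queue (position 0) and the moves
of the agents in `GO(r,m) ∪ {i}` are pairwise compatible. -/
def safeToGo (O : Move kin kout → Move kin kout → Prop)
    (r : Run kin kout Mem Extra) (m i : ℕ) : Prop :=
  (∃ p, posAt (r m).1 i = some p ∧ p.2 = 0) ∧
  ∀ j ∈ GOs r m ∪ {i}, ∀ k ∈ GOs r m ∪ {i}, j ≠ k →
    ∀ mj mk, moveAt (r m).1 j = some mj → moveAt (r m).1 k = some mk → O mj mk

/-- `P` has unnecessary waiting with respect to `γ`. -/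
def UnnecessaryWaiting (O : Move kin kout → Move kin kout → Prop)
    (C : Ctx kin kout Mem Extra Msg) (P : Prot kin kout Mem Extra) : Prop :=
  ∃ r ∈ Runs C P, ∃ m i, safeToGo O r m i ∧ i ∉ GOs r m

/-- The time at which agent `i` goes through the intersection in run `r` (∞ if never). -/
def gotime (r : Run kin kout Mem Extra) (i : ℕ) : ℕ∞ :=
  sInf {n : ℕ∞ | ∃ m : ℕ, goingAt r m i ∧ n = (m : ℕ∞)}

/-- `P` dominates `P'`: on all corresponding runs, every agent goes at least as early. -/
def Dominates (C : Ctx kin kout Mem Extra Msg) (P P' : Prot kin kout Mem Extra) : Prop :=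
  ∀ r ∈ Runs C P, ∀ r' ∈ Runs C P', r 0 = r' 0 → ∀ i, gotime r i ≤ gotime r' i

def StrictDominates (C : Ctx kin kout Mem Extra Msg) (P P' : Prot kin kout Mem Extra) : Prop :=
  Dominates C P P' ∧ ¬ Dominates C P' P

/-- `P` is optimal: no intersection protocol strictly dominates it. -/
def Optimal (O : Move kin kout → Move kin kout → Prop)
    (C : Ctx kin kout Mem Extra Msg) (P : Prot kin kout Mem Extra) : Prop :=
  ¬ ∃ P' : Prot kin kout Mem Extra,
      IsIntersectionProtocol O C P' ∧ StrictDominates C P' P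

/-- `P` lexicographically dominates `P'`. -/
def LexDominates (C : Ctx kin kout Mem Extra Msg) (P P' : Prot kin kout Mem Extra) : Prop :=
  ∀ r ∈ Runs C P, ∀ r' ∈ Runs C P', r 0 = r' 0 →
    (∀ m, GOs r m = GOs r' m) ∨
    ∃ m, (∀ k < m, GOs r k = GOs r' k) ∧ GOs r m ≠ GOs r' m ∧ GOs r' m ⊂ GOs r m

def StrictLexDominates (C : Ctx kin kout Mem Extra Msg) (P P' : Prot kin kout Mem Extra) :
    Prop :=
  LexDominates C P P' ∧ ¬ LexDominates C P' P

/-- `P` is lexicographically optimal: no intersection protocol strictly lexicographically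
dominates it. -/
def LexOptimal (O : Move kin kout → Move kin kout → Prop)
    (C : Ctx kin kout Mem Extra Msg) (P : Prot kin kout Mem Extra) : Prop :=
  ¬ ∃ P' : Prot kin kout Mem Extra,
      IsIntersectionProtocol O C P' ∧ StrictLexDominates C P' P

/-- Knowledge: `K_i φ` holds at `(r,m)` iff `φ` holds at all points of the system where
agent `i` has the same local state. -/
def Kn (S : Set (Run kin kout Mem Extra)) (i : ℕ)
    (φ : Run kin kout Mem Extra → ℕ → Prop) (r : Run kin kout Mem Extra) (m : ℕ) : Prop :=
  ∀ r' ∈ S, ∀ m', (r' m').2 i = (r m).2 i → φ r' m'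

/-- The adversary model has no failures. -/
def NoFailures (C : Ctx kin kout Mem Extra Msg) : Prop :=
  ∀ α ∈ C.adv, ∀ k i, α.Ft k i = true ∧ α.Fr k i = true

/-- Full information exchange: every agent broadcasts (an injective encoding of) its
entire local state in every round, and records every broadcast it receives. -/
def FullInfo (C : Ctx kin kout Mem Extra Msg) : Prop :=
  (∃ enc : LState kin kout Mem Extra → Msg, Function.Injective enc ∧
      ∀ i s a o, C.iep.msg i s a o = some (enc s)) ∧
  (∀ i s a, Function.Injective fun B : Set Msg => C.iep.upd i s a B)

/-- A sufficiently rich context: every agent that will be at the front of some lane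
broadcasts a message encoding its lane and intent, tagged as coming from the front;
no other message is tagged as a front message; and each agent records the
(lane, intent) pair of each front agent it hears from. -/
def SufficientlyRich (C : Ctx kin kout Mem Extra Msg) : Prop :=
  ∃ dec : Msg → Option (Move kin kout),
    (∀ i s a (o : Reading kin kout × Extra) (l : Fin kin),
        o.1.front → o.1.lane = LaneStatus.inLane l →
        ∃ msg, C.iep.msg i s a o = some msg ∧ dec msg = some (l, o.1.intent)) ∧
    (∀ i s a (o : Reading kin kout × Extra), ¬ o.1.front →
        ∀ msg, C.iep.msg i s a o = some msg → dec msg = none) ∧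
    (∃ rec : Mem → Set (Move kin kout),
        ∀ i s a B, rec (C.iep.upd i s a B) = {mv | ∃ msg ∈ B, dec msg = some mv})

/-- The set of agents at the front of a queue. -/
def FrontSet (e : EnvState kin kout) : Set ℕ := {i | isFront e i}

/-- `P` depends only on the agents at the front of their queues. -/
def DependsOnlyOnFront (C : Ctx kin kout Mem Extra Msg) (P : Prot kin kout Mem Extra) :
    Prop :=
  ∀ r ∈ Runs C P, ∀ r' ∈ Runs C P, ∀ m m' i,
    FrontSet (r m).1 = FrontSet (r' m').1 → P i ((r m).2 i) = P i ((r' m').2 i)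

/-- The choices of an adversary in a single round: arrivals, the transmission
environment and the failure values. -/
structure Choice (kin kout : ℕ) where
  arrivals : Set (ℕ × Fin kin × Fin kout)
  T : Set ((Fin kin × ℕ) × (Fin kin × ℕ))
  Ft : ℕ → Bool
  Fr : ℕ → Bool

/-- The choices of adversary `α` in round `m+1`. -/
def choiceAt (α : Adversary kin kout) (m : ℕ) : Choice kin kout where
  arrivals := {p | α.arrive p.1 = (m + 1, p.2.1, p.2.2)}
  T := α.T
  Ft := fun i => α.Ft m i
  Fr := fun i => α.Fr m i

/-- The adversary history `H(α,m) = ⟨α_0, …, α_{m-1}⟩`. -/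
def hist (α : Adversary kin kout) (m : ℕ) : List (Choice kin kout) :=
  (List.range m).map (choiceAt α)

/-- The adversary history of run `r` up to time `m`. -/
def histOf (r : Run kin kout Mem Extra) (m : ℕ) : List (Choice kin kout) :=
  hist (r 0).1.adv m

/-- An intersection policy: a map from adversary histories to sets of permitted moves. -/
abbrev Policy (kin kout : ℕ) := List (Choice kin kout) → Set (Move kin kout)

/-- The set `H_γ` of adversary histories of the context. -/
def Hists (C : Ctx kin kout Mem Extra Msg) : Set (List (Choice kin kout)) :=
  {h | ∃ α ∈ C.adv, ∃ m, h = hist α m}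

/-- A feasible infinite sequence of histories: one arising from a single adversary. -/
def Feasible (F : Set (Adversary kin kout)) (h : ℕ → List (Choice kin kout)) : Prop :=
  ∃ α ∈ F, ∀ m, h m = hist α m

/-- Conflict-freedom of an intersection policy. -/
def ConflictFree (O : Move kin kout → Move kin kout → Prop)
    (C : Ctx kin kout Mem Extra Msg) (σ : Policy kin kout) : Prop :=
  ∀ h ∈ Hists C, ∀ mv ∈ σ h, ∀ mv' ∈ σ h, mv ≠ mv' → O mv mv'

/-- Fairness of an intersection policy. -/
def FairPolicy (C : Ctx kin kout Mem Extra Msg) (σ : Policy kin kout) : Prop :=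
  ∀ h : ℕ → List (Choice kin kout), Feasible C.adv h →
    ∀ mv : Move kin kout, ∀ m, ∃ m' ≥ m, mv ∈ σ (h m')

/-- A correct intersection policy: conflict-free and fair. -/
def CorrectPolicy (O : Move kin kout → Move kin kout → Prop)
    (C : Ctx kin kout Mem Extra Msg) (σ : Policy kin kout) : Prop :=
  ConflictFree O C σ ∧ FairPolicy C σ

/-- A synchronous context: the time is encoded in each agent's local state. -/
def Synchronous (C : Ctx kin kout Mem Extra Msg) : Prop :=
  ∃ clock : LState kin kout Mem Extra → ℕ,
    ∀ P : Prot kin kout Mem Extra, ∀ r ∈ Runs C P, ∀ m i, clock ((r m).2 i) = m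

/-- The knowledge condition of the knowledge-based program `P^σ`:
`front_i ∧ (lane_i, intent_i) ∈ σ`. -/
def phiSigma (σ : Policy kin kout) (i : ℕ) (r : Run kin kout Mem Extra) (m : ℕ) : Prop :=
  frontAt r m i ∧ ∃ mv, moveAt (r m).1 i = some mv ∧ mv ∈ σ (histOf r m)

/-- `P` implements the knowledge-based program `if K_i φ_i then go else noop` in `γ`. -/
def Implements (C : Ctx kin kout Mem Extra Msg) (P : Prot kin kout Mem Extra)
    (φ : ℕ → Run kin kout Mem Extra → ℕ → Prop) : Prop :=
  ∀ r ∈ Runs C P, ∀ m i, (P i ((r m).2 i) = Act.go ↔ Kn (Runs C P) i (φ i) r m)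

/-- Behavioral equivalence: the protocols take the same actions at all reachable states. -/
def BehEq (C : Ctx kin kout Mem Extra Msg) (P P' : Prot kin kout Mem Extra) : Prop :=
  (∀ r ∈ Runs C P, ∀ m i, P i ((r m).2 i) = P' i ((r m).2 i)) ∧
  (∀ r ∈ Runs C P', ∀ m i, P i ((r m).2 i) = P' i ((r m).2 i))

/-- `γ` is `σ`-aware. -/
def SigmaAware (C : Ctx kin kout Mem Extra Msg) (σ : Policy kin kout) : Prop :=
  ∀ P : Prot kin kout Mem Extra, ∀ r ∈ Runs C P, ∀ m i (l : Fin kin) (l' : Fin kout),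
    (l, l') ∈ σ (histOf r m) → i ∈ (r m).1.queue l →
    Kn (Runs C P) i (fun r' m' => (l, l') ∈ σ (histOf r' m')) r m

/-- `γ` is `next`-aware. -/
def NextAware (C : Ctx kin kout Mem Extra Msg)
    (next : List (Choice kin kout) → Fin kin) : Prop :=
  ∀ P : Prot kin kout Mem Extra, ∀ r ∈ Runs C P, ∀ m i (l : Fin kin),
    next (histOf r m) = l →
    Kn (Runs C P) i (fun r' m' => next (histOf r' m') = l) r m

/-- Cyclic distance from `a` to `b` (mod `kin`). -/
def distC (a b : Fin kin) : ℕ := (b.val + kin - a.val) % kin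

/-- `l` lies in the cyclic interval `[a, b)` of incoming lanes. -/
def inCyc (a b l : Fin kin) : Prop := distC a l < distC a b

/-- `mv` is compatible with every move in `S`. -/
def compatAll (O : Move kin kout → Move kin kout → Prop)
    (S : Set (Move kin kout)) (mv : Move kin kout) : Prop :=
  ∀ mv' ∈ S, O mv mv'

/-- The proposition `V_i` of the knowledge-based program `𝐏`. -/
def Vprop (O : Move kin kout → Move kin kout → Prop) (σ : Policy kin kout)
    (next : List (Choice kin kout) → Fin kin) (i : ℕ)
    (r : Run kin kout Mem Extra) (m : ℕ) : Prop :=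
  ∃ mv, moveAt (r m).1 i = some mv ∧ mv ∉ σ (histOf r m) ∧
    (∀ j mj, goingAt r m j → moveAt (r m).1 j = some mj →
        mj ∈ σ (histOf r m) → O mv mj) ∧
    (∀ j mj, j ≠ i → goingAt r m j → moveAt (r m).1 j = some mj →
        mj ∉ σ (histOf r m) → inCyc (next (histOf r m)) mv.1 mj.1 → O mv mj)

/-- The knowledge condition of the knowledge-based program `𝐏`:
`front_i ∧ ((lane_i, intent_i) ∈ σ ∨ V_i)`. -/
def phiP (O : Move kin kout → Move kin kout → Prop) (σ : Policy kin kout)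
    (next : List (Choice kin kout) → Fin kin) (i : ℕ)
    (r : Run kin kout Mem Extra) (m : ℕ) : Prop :=
  frontAt r m i ∧
    ((∃ mv, moveAt (r m).1 i = some mv ∧ mv ∈ σ (histOf r m)) ∨ Vprop O σ next i r m)

/-- Fairness of a `next` function. -/
def FairNext (C : Ctx kin kout Mem Extra Msg)
    (next : List (Choice kin kout) → Fin kin) : Prop :=
  ∀ h : ℕ → List (Choice kin kout), Feasible C.adv h →
    ∀ m (l : Fin kin), ∃ m' ≥ m, next (h m') = l

/-- Fairness of a pair `(σ, next)`. -/
def PairFair (O : Move kin kout → Move kin kout → Prop)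
    (C : Ctx kin kout Mem Extra Msg) (σ : Policy kin kout)
    (next : List (Choice kin kout) → Fin kin) : Prop :=
  ∀ h : ℕ → List (Choice kin kout), Feasible C.adv h →
    ∀ m (mv : Move kin kout), ∃ m' ≥ m,
      mv ∈ σ (h m') ∨ (next (h m') = mv.1 ∧ compatAll O (σ (h m')) mv)

/-- `next(h) = |h| mod |L_in|` at time `t`. -/
def nextL (hkin : 0 < kin) (t : ℕ) : Fin kin := ⟨t % kin, Nat.mod_lt _ hkin⟩

/-- The stages of the construction of the set `Pos_i`, starting from the lane `nxt` and
proceeding in cyclic order; `M` is the set of moves received from front agents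
(empty when there is no communication). -/
def posStage (hkin : 0 < kin) (O : Move kin kout → Move kin kout → Prop)
    (M : Set (Move kin kout)) (nxt : Fin kin) : ℕ → Set (Move kin kout)
  | 0 => ∅
  | t + 1 =>
    let S := posStage hkin O M nxt t
    let l : Fin kin := ⟨(nxt.val + t) % kin, Nat.mod_lt _ hkin⟩
    if ∃ l' : Fin kout, (l, l') ∈ M then
      S ∪ {mv | mv.1 = l ∧ mv ∈ M ∧ compatAll O S mv}
    else
      S ∪ {mv | mv.1 = l ∧ compatAll O S mv}

/-- The set `Pos_i` computed from the received moves `M`, the lane `nxt = next` and the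
agent's own lane `lanei`. -/
def PosSet (hkin : 0 < kin) (O : Move kin kout → Move kin kout → Prop)
    (M : Set (Move kin kout)) (nxt lanei : Fin kin) : Set (Move kin kout) :=
  posStage hkin O M nxt (distC nxt lanei)

/-- The stage `Pos_i^l` of the construction of `Pos_i`, for a lane `l` in the cyclic
interval `[nxt, lane_i)`. -/
def PosUpTo (hkin : 0 < kin) (O : Move kin kout → Move kin kout → Prop)
    (M : Set (Move kin kout)) (nxt l : Fin kin) : Set (Move kin kout) :=
  posStage hkin O M nxt (distC nxt l + 1)

/-- The adversary model with no failures. -/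
def NFadv (kin kout : ℕ) : Set (Adversary kin kout) :=
  {α | ∀ k i, α.Ft k i = true ∧ α.Fr k i = true}

/-- The adversary model with crash failures. -/
def CRadv (kin kout : ℕ) : Set (Adversary kin kout) :=
  {α | (∀ k i, α.Fr k i = true) ∧
    ∀ k i, α.Ft k i = false → ∀ k', k < k' → α.Ft k' i = false}

/-- The adversary model with sending omissions. -/
def SOadv (kin kout : ℕ) : Set (Adversary kin kout) :=
  {α | ∀ k i, α.Fr k i = true}

/-- The information-exchange protocol of `γ_∅`: a single memory state, no messages,
and sensor readings `⟨front_i, lane_i, intent_i, time_i⟩`. -/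
def E0 (kin kout : ℕ) : IEP kin kout Unit ℕ Empty where
  initMem _ := ()
  extra e _ := e.time
  msg _ _ _ _ := none
  upd _ _ _ _ := ()

/-- The context `γ_∅(F)`. -/
def gammaEmpty (kin kout : ℕ) (F : Set (Adversary kin kout)) : Ctx kin kout Unit ℕ Empty :=
  ⟨E0 kin kout, F⟩

/-- The protocol `P^∅`: go iff at the front and own move compatible with `Pos_i`. -/
def Pempty (hkin : 0 < kin) (O : Move kin kout → Move kin kout → Prop) :
    Prot kin kout Unit ℕ := fun _ s =>
  match s.2.1.lane with
  | LaneStatus.inLane l =>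
      if s.2.1.front ∧ compatAll O (PosSet hkin O ∅ (nextL hkin s.2.2) l) (l, s.2.1.intent)
      then Act.go else Act.noop
  | _ => Act.noop

/-- The information-exchange protocol of `γ_intent`: exactly the agents at the front of a
lane broadcast `(lane_i, intent_i)`; the memory is the set of moves received in the
current round; sensor readings are `⟨front_i, lane_i, intent_i, time_i⟩`. -/
def Eintent (kin kout : ℕ) : IEP kin kout (Set (Move kin kout)) ℕ (Move kin kout) where
  initMem _ := ∅
  extra e _ := e.time
  msg _ _ _ o :=
    if o.1.front then
      match o.1.lane with
      | LaneStatus.inLane l => some (l, o.1.intent)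
      | _ => none
    else none
  upd _ _ _ B := B

/-- The context `γ_intent(F)`. -/
def gammaIntent (kin kout : ℕ) (F : Set (Adversary kin kout)) :
    Ctx kin kout (Set (Move kin kout)) ℕ (Move kin kout) :=
  ⟨Eintent kin kout, F⟩

/-- The protocol `P^intent`: go iff at the front and own move compatible with `Pos_i`
computed from the received moves. -/
def Pintent (hkin : 0 < kin) (O : Move kin kout → Move kin kout → Prop) :
    Prot kin kout (Set (Move kin kout)) ℕ := fun _ s =>
  match s.2.1.lane with
  | LaneStatus.inLane l =>
      if s.2.1.front ∧
          compatAll O (PosSet hkin O s.1 (nextL hkin s.2.2) l) (l, s.2.1.intent)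
      then Act.go else Act.noop
  | _ => Act.noop

end Inter

open Inter

/-! Under `P^∅` the incoming lanes are scanned cyclically starting from `next`, and a front
agent goes iff its move is compatible with every move admitted on the lanes scanned before its
own. Of two agents going together, the later one in the scan has checked the move of the earlier
one, which gives safety. An agent waiting at the front of lane `l` goes at the latest when
`next = l`, since then `Pos_i = ∅`.

For optimality, suppose an intersection protocol `P'` lexicographically dominates `P^∅`. Up to
the first round where the two disagree, corresponding runs have the same environment, and there
`P'` lets some front agent go that `P^∅` holds back because its move conflicts with some
`mv ∈ Pos_i`. Since an agent of `γ_∅` only sees its own reading and the time, `P'` lets it go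
also in the run where only this agent and one agent with move `mv` have arrived. There `P^∅`
lets the second agent go but not the first, so by domination `P'` lets both go, contradicting
safety. Hence the `GO` sets of corresponding runs always agree and the domination is not
strict. -/

namespace Inter

variable {kin kout : ℕ} {Mem Extra Msg : Type*}

section CyclicOrder

lemma distC_eq_val_sub (a b : Fin kin) : distC a b = ((b - a : Fin kin) : ℕ) := by
  rw [Fin.val_sub, distC, Nat.add_sub_assoc a.isLt.le, Nat.add_comm]

lemma distC_eq_iff {a l : Fin kin} {t : ℕ} (ht : t < kin) :
    distC a l = t ↔ l = ⟨(a.val + t) % kin, Nat.mod_lt _ (by omega)⟩ := by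
  have : NeZero kin := ⟨by omega⟩
  have hlane : (⟨(a.val + t) % kin, Nat.mod_lt _ (by omega)⟩ : Fin kin) = a + ⟨t, ht⟩ :=
    Fin.ext (Fin.val_add a ⟨t, ht⟩).symm
  rw [hlane, distC_eq_val_sub, ← sub_eq_iff_eq_add', Fin.ext_iff]

lemma distC_lt (a b : Fin kin) : distC a b < kin := by
  rw [distC_eq_val_sub]
  exact (b - a).isLt

lemma distC_self (a : Fin kin) : distC a a = 0 := by
  simp [distC]

lemma distC_injective (a : Fin kin) : Function.Injective (distC a) := fun _ b' h =>
  ((distC_eq_iff (distC_lt a b')).1 h).trans ((distC_eq_iff (distC_lt a b')).1 rfl).symm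

end CyclicOrder

section PosSet

variable (hkin : 0 < kin) (O : Move kin kout → Move kin kout → Prop)

theorem mem_posStage_empty_iff {nxt : Fin kin} {t : ℕ} (ht : t ≤ kin) {mv : Move kin kout} :
    mv ∈ posStage hkin O ∅ nxt t ↔
      distC nxt mv.1 < t ∧ compatAll O (PosSet hkin O ∅ nxt mv.1) mv := by
  induction t with
  | zero => simp [posStage]
  | succ t ih =>
    simp only [posStage, Set.mem_empty_iff_false, exists_false, if_false, Set.mem_union,
      Set.mem_ofPred_eq, ih (by omega), ← distC_eq_iff (show t < kin by omega)]
    constructor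
    · rintro (⟨hlt, hc⟩ | ⟨rfl, hc⟩)
      · exact ⟨by omega, hc⟩
      · exact ⟨by omega, hc⟩
    · rintro ⟨hlt, hc⟩
      rcases Nat.lt_succ_iff_lt_or_eq.1 hlt with hlt | heq
      · exact Or.inl ⟨hlt, hc⟩
      · exact Or.inr ⟨heq, heq ▸ hc⟩

theorem mem_PosSet_empty_iff {nxt l : Fin kin} {mv : Move kin kout} :
    mv ∈ PosSet hkin O ∅ nxt l ↔
      distC nxt mv.1 < distC nxt l ∧ compatAll O (PosSet hkin O ∅ nxt mv.1) mv :=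
  mem_posStage_empty_iff hkin O (distC_lt nxt l).le

lemma PosSet_self (M : Set (Move kin kout)) (nxt : Fin kin) : PosSet hkin O M nxt nxt = ∅ := by
  rw [PosSet, distC_self, posStage]

variable {O}

theorem compat_of_compatAll_PosSet (hO : ∀ a b, O a b → O b a) (nxt : Fin kin)
    {mi mj : Move kin kout} (hne : mi.1 ≠ mj.1)
    (hi : compatAll O (PosSet hkin O ∅ nxt mi.1) mi)
    (hj : compatAll O (PosSet hkin O ∅ nxt mj.1) mj) : O mi mj := by
  rcases lt_trichotomy (distC nxt mi.1) (distC nxt mj.1) with hlt | heq | hlt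
  · exact hO _ _ (hj mi ((mem_PosSet_empty_iff hkin O).2 ⟨hlt, hi⟩))
  · exact absurd (distC_injective nxt heq) hne
  · exact hi mj ((mem_PosSet_empty_iff hkin O).2 ⟨hlt, hj⟩)

end PosSet

section Step

variable {E : IEP kin kout Mem Extra Msg} {P : Prot kin kout Mem Extra}
  {g : GState kin kout Mem Extra}

def dequeue (P : Prot kin kout Mem Extra) (g : GState kin kout Mem Extra) (l : Fin kin) :
    List ℕ :=
  match (g.1.queue l).head? with
  | some i => if P i (g.2 i) = Act.go then (g.1.queue l).tail else g.1.queue l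
  | none => g.1.queue l

lemma step_queue (l : Fin kin) :
    (step E P g).1.queue l =
      if h : ∃ i l', g.1.adv.arrive i = (g.1.time + 1, l, l') then dequeue P g l ++ [h.choose]
      else dequeue P g l := rfl

lemma dequeue_sublist (l : Fin kin) : (dequeue P g l).Sublist (g.1.queue l) := by
  unfold dequeue
  split
  · split
    · exact List.tail_sublist _
    · exact List.Sublist.refl _
  · exact List.Sublist.refl _

lemma dequeue_of_head {l : Fin kin} {i : ℕ} (h : (g.1.queue l).head? = some i) :
    dequeue P g l = if P i (g.2 i) = Act.go then (g.1.queue l).tail else g.1.queue l := by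
  rw [dequeue, h]

def QueueInv (e : EnvState kin kout) : Prop :=
  (∀ i l, i ∈ e.queue l → (e.adv.arrive i).2.1 = l ∧ (e.adv.arrive i).1 ≤ e.time) ∧
  ∀ l, (e.queue l).Nodup

lemma QueueInv.lane_eq {e : EnvState kin kout} (h : QueueInv e) {i : ℕ} {l l' : Fin kin}
    (hl : i ∈ e.queue l) (hl' : i ∈ e.queue l') : l = l' :=
  (h.1 i l hl).1.symm.trans (h.1 i l' hl').1

lemma queueInv_step (h : QueueInv g.1) : QueueInv (step E P g).1 := by
  have hold : ∀ l, ∀ i ∈ dequeue P g l,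
      (g.1.adv.arrive i).2.1 = l ∧ (g.1.adv.arrive i).1 ≤ g.1.time :=
    fun l i hi => h.1 i l ((dequeue_sublist l).subset hi)
  refine ⟨fun i l hi => ?_, fun l => ?_⟩
  · change i ∈ (step E P g).1.queue l at hi
    rw [step_queue] at hi
    split at hi
    · rename_i hex
      rcases List.mem_append.1 hi with hi | hi
      · exact ⟨(hold l i hi).1, Nat.le_succ_of_le (hold l i hi).2⟩
      · obtain rfl := List.mem_singleton.1 hi
        obtain ⟨l', hl'⟩ := hex.choose_spec
        show (g.1.adv.arrive _).2.1 = l ∧ (g.1.adv.arrive _).1 ≤ g.1.time + 1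
        rw [hl']
        exact ⟨rfl, le_rfl⟩
    · exact ⟨(hold l i hi).1, Nat.le_succ_of_le (hold l i hi).2⟩
  · rw [step_queue]
    have hnd := (h.2 l).sublist (dequeue_sublist (P := P) l)
    split
    · rename_i hex
      rw [← List.concat_eq_append, List.nodup_concat]
      refine ⟨fun hmem => ?_, hnd⟩
      obtain ⟨l', hl'⟩ := hex.choose_spec
      have := (hold l _ hmem).2
      rw [hl'] at this
      omega
    · exact hnd

lemma head_step_of_ne_go {l : Fin kin} {i : ℕ} (h : (g.1.queue l).head? = some i)
    (hng : P i (g.2 i) ≠ Act.go) : ((step E P g).1.queue l).head? = some i := by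
  rw [step_queue, dequeue_of_head h, if_neg hng]
  split
  · obtain ⟨t, ht⟩ := List.head?_eq_some_iff.1 h
    rw [ht]
    rfl
  · exact h

lemma not_mem_step_of_go (hinv : QueueInv g.1) {l : Fin kin} {i : ℕ}
    (h : (g.1.queue l).head? = some i) (hgo : P i (g.2 i) = Act.go) (l' : Fin kin) :
    i ∉ (step E P g).1.queue l' := by
  have hmem : i ∈ g.1.queue l := List.mem_of_head? h
  have hdeq : i ∉ dequeue P g l' := by
    intro hi
    obtain rfl := hinv.lane_eq hmem ((dequeue_sublist l').subset hi)
    obtain ⟨t, ht⟩ := List.head?_eq_some_iff.1 h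
    rw [dequeue_of_head h, if_pos hgo, ht] at hi
    have hnd := hinv.2 l
    rw [ht] at hnd
    exact (List.nodup_cons.1 hnd).1 hi
  intro hi
  rw [step_queue] at hi
  split at hi
  · rename_i hex
    rcases List.mem_append.1 hi with hi | hi
    · exact hdeq hi
    · obtain rfl := List.mem_singleton.1 hi
      obtain ⟨l'', hl''⟩ := hex.choose_spec
      have := (hinv.1 _ l hmem).2
      rw [hl''] at this
      omega
  · exact hdeq hi

end Step

attribute [ext] EnvState

lemma step_env_congr {E : IEP kin kout Mem Extra Msg} {P P' : Prot kin kout Mem Extra}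
    {g g' : GState kin kout Mem Extra} (he : g.1 = g'.1)
    (hgo : ∀ i, isFront g.1 i → (P i (g.2 i) = Act.go ↔ P' i (g'.2 i) = Act.go)) :
    (step E P g).1 = (step E P' g').1 := by
  have hdeq : ∀ l, dequeue P g l = dequeue P' g' l := by
    intro l
    cases hh : (g.1.queue l).head? with
    | none => rw [dequeue, dequeue, hh, ← he, hh]
    | some i =>
      rw [dequeue_of_head hh, dequeue_of_head (he ▸ hh)]
      simp only [hgo i ⟨l, hh⟩, he]
  have hdone : {i | isFront g.1 i ∧ P i (g.2 i) = Act.go} =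
      {i | isFront g'.1 i ∧ P' i (g'.2 i) = Act.go} := by
    ext i
    simp only [Set.mem_ofPred_eq, ← he]
    exact and_congr_right (hgo i)
  apply EnvState.ext
  · show g.1.adv = g'.1.adv
    rw [he]
  · show g.1.time + 1 = g'.1.time + 1
    rw [he]
  · exact funext fun l => by rw [step_queue, step_queue, hdeq, he]
  · show g.1.done ∪ {i | isFront g.1 i ∧ P i (g.2 i) = Act.go} = g'.1.done ∪ _
    rw [hdone, he]

section Front

variable {e : EnvState kin kout} {i : ℕ} {l : Fin kin}

lemma QueueInv.moveAt_of_head (hinv : QueueInv e) (h : (e.queue l).head? = some i) :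
    moveAt e i = some (l, intentOf e i) := by
  have hex : ∃ l', i ∈ e.queue l' := ⟨l, List.mem_of_head? h⟩
  obtain ⟨t, ht⟩ := List.head?_eq_some_iff.1 h
  rw [moveAt, posAt, dif_pos hex, hinv.lane_eq hex.choose_spec (List.mem_of_head? h)]
  simp [ht]

lemma QueueInv.minimalReading_of_head (hinv : QueueInv e) (h : (e.queue l).head? = some i) :
    minimalReading e i = ⟨True, .inLane l, intentOf e i⟩ := by
  have hex : ∃ l', i ∈ e.queue l' := ⟨l, List.mem_of_head? h⟩
  simp only [minimalReading, dif_pos hex, hinv.lane_eq hex.choose_spec (List.mem_of_head? h)]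
  exact congrArg (Reading.mk · _ _) (eq_true ⟨l, h⟩)

end Front

lemma Adversary.eq_of_arrive (α : Adversary kin kout) {j k t : ℕ} {l : Fin kin}
    {x y : Fin kout} (hj : α.arrive j = (t, l, x)) (hk : α.arrive k = (t, l, y)) : j = k := by
  by_contra hne
  exact α.conflictFree j k hne (by rw [hj, hk]) (by rw [hj, hk])

section Runs

variable {C : Ctx kin kout Mem Extra Msg} {P P' : Prot kin kout Mem Extra}
  {r r' : Run kin kout Mem Extra}

lemma runs_time (hr : r ∈ Runs C P) (m : ℕ) : (r m).1.time = m := by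
  induction m with
  | zero => exact hr.1.2.1
  | succ m ih => rw [hr.2 m]; exact congrArg (· + 1) ih

lemma runs_adv (hr : r ∈ Runs C P) (m : ℕ) : (r m).1.adv = (r 0).1.adv := by
  induction m with
  | zero => rfl
  | succ m ih => rw [hr.2 m]; exact ih

lemma runs_queueInv (hr : r ∈ Runs C P) (m : ℕ) : QueueInv (r m).1 := by
  induction m with
  | zero => exact ⟨fun i l hi => by simp [hr.1.2.2.1 l] at hi, fun l => by simp [hr.1.2.2.1 l]⟩
  | succ m ih => rw [hr.2 m]; exact queueInv_step ih

lemma runs_not_frontAt_zero (hr : r ∈ Runs C P) (i : ℕ) : ¬ frontAt r 0 i := by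
  rintro ⟨l, hl⟩
  simp [hr.1.2.2.1 l] at hl

theorem goingAt_iff (hr : r ∈ Runs C P) {m i : ℕ} :
    goingAt r m i ↔ frontAt r m i ∧ P i ((r m).2 i) = Act.go := by
  refine ⟨fun ⟨⟨l, hl⟩, hnext⟩ => ⟨⟨l, hl⟩, ?_⟩, fun ⟨⟨l, hl⟩, hgo⟩ => ⟨⟨l, hl⟩, ?_⟩⟩
  · by_contra hng
    exact hnext ⟨l, hr.2 m ▸ head_step_of_ne_go hl hng⟩
  · rintro ⟨l', hl'⟩
    rw [hr.2 m] at hl'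
    exact not_mem_step_of_go (runs_queueInv hr m) hl hgo l' (List.mem_of_head? hl')

theorem env_eq_of_GOs_eq (hr : r ∈ Runs C P) (hr' : r' ∈ Runs C P') (h0 : r 0 = r' 0)
    {m : ℕ} (hGO : ∀ k < m, GOs r k = GOs r' k) : (r m).1 = (r' m).1 := by
  induction m with
  | zero => rw [h0]
  | succ m ih =>
    have he := ih fun k hk => hGO k (by omega)
    rw [hr.2 m, hr'.2 m]
    refine step_env_congr he fun i hi => ?_
    have := Set.ext_iff.1 (hGO m (by omega)) i
    simp only [GOs, Set.mem_ofPred_eq, goingAt_iff hr, goingAt_iff hr', frontAt, ← he] at this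
    exact and_congr_right_iff.1 this hi

lemma runs_queue_eq_nil (hr : r ∈ Runs C P) {n : ℕ}
    (hn : ∀ k, n < ((r 0).1.adv.arrive k).1) (l : Fin kin) : (r n).1.queue l = [] := by
  refine List.eq_nil_iff_forall_not_mem.2 fun k hk => ?_
  have := ((runs_queueInv hr n).1 k l hk).2
  rw [runs_time hr, runs_adv hr] at this
  exact absurd this (not_le.2 (hn k))

lemma GOs_eq_empty_of_lt_arrive (hr : r ∈ Runs C P) {n : ℕ}
    (hn : ∀ k, n < ((r 0).1.adv.arrive k).1) : GOs r n = ∅ :=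
  Set.eq_empty_of_forall_notMem fun _ ⟨⟨l, hl⟩, _⟩ => by simp [runs_queue_eq_nil hr hn l] at hl

lemma runs_queue_eq_singleton (hr : r ∈ Runs C P) {m k : ℕ} {l : Fin kin} {x : Fin kout}
    (hm : 0 < m) (hfirst : ∀ j, m ≤ ((r 0).1.adv.arrive j).1)
    (hk : (r 0).1.adv.arrive k = (m, l, x)) : (r m).1.queue l = [k] := by
  obtain ⟨n, rfl⟩ : ∃ n, m = n + 1 := ⟨m - 1, by omega⟩
  have hdeq : dequeue P (r n) l = [] :=
    List.sublist_nil.1 (runs_queue_eq_nil hr (n := n) hfirst l ▸ dequeue_sublist l)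
  have hadv : (r n).1.adv = (r 0).1.adv := runs_adv hr n
  have htime : (r n).1.time = n := runs_time hr n
  have hex : ∃ j x', (r n).1.adv.arrive j = ((r n).1.time + 1, l, x') :=
    ⟨k, x, by rw [hadv, htime, hk]⟩
  rw [hr.2 n, step_queue, dif_pos hex, hdeq]
  obtain ⟨x', hx'⟩ := hex.choose_spec
  rw [Adversary.eq_of_arrive _ hx' (by rw [hadv, htime, hk])]
  rfl

lemma moveAt_of_first_arrival (hr : r ∈ Runs C P) {m k : ℕ} {mv : Move kin kout} (hm : 0 < m)
    (hfirst : ∀ j, m ≤ ((r 0).1.adv.arrive j).1) (hk : (r 0).1.adv.arrive k = (m, mv)) :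
    moveAt (r m).1 k = some mv := by
  have hhead : ((r m).1.queue mv.1).head? = some k := by
    rw [runs_queue_eq_singleton hr hm hfirst hk]
    rfl
  rw [(runs_queueInv hr m).moveAt_of_head hhead, intentOf, runs_adv hr, hk]

end Runs

def initState (C : Ctx kin kout Mem Extra Msg) (α : Adversary kin kout) :
    GState kin kout Mem Extra :=
  let e : EnvState kin kout := ⟨α, 0, fun _ => [], ∅⟩
  (e, fun i => (C.iep.initMem i, minimalReading e i, C.iep.extra e i))

def runFrom (C : Ctx kin kout Mem Extra Msg) (P : Prot kin kout Mem Extra)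
    (α : Adversary kin kout) : Run kin kout Mem Extra :=
  fun n => (step C.iep P)^[n] (initState C α)

lemma runFrom_mem {C : Ctx kin kout Mem Extra Msg} (P : Prot kin kout Mem Extra)
    {α : Adversary kin kout} (hα : α ∈ C.adv) : runFrom C P α ∈ Runs C P :=
  ⟨⟨hα, rfl, fun _ => rfl, rfl, fun _ => rfl⟩, fun _ => Function.iterate_succ_apply' _ _ _⟩

section GammaEmpty

variable {F : Set (Adversary kin kout)} {P : Prot kin kout Unit ℕ} {r : Run kin kout Unit ℕ}

lemma gammaEmpty_local (hr : r ∈ Runs (gammaEmpty kin kout F) P) (m i : ℕ) :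
    (r m).2 i = ((), minimalReading (r m).1 i, m) := by
  have hlocal : (r m).2 i = ((), minimalReading (r m).1 i, (r m).1.time) := by
    cases m with
    | zero => exact hr.1.2.2.2.2 i
    | succ m => rw [hr.2 m]; rfl
  rw [hlocal, runs_time hr m]

theorem mem_GOs_gammaEmpty_iff (hr : r ∈ Runs (gammaEmpty kin kout F) P) {m i : ℕ}
    {l : Fin kin} (hl : ((r m).1.queue l).head? = some i) :
    i ∈ GOs r m ↔ P i ((), ⟨True, .inLane l, intentOf (r m).1 i⟩, m) = Act.go := by
  rw [GOs, Set.mem_ofPred_eq, goingAt_iff hr, gammaEmpty_local hr,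
    (runs_queueInv hr m).minimalReading_of_head hl]
  exact and_iff_right ⟨l, hl⟩

lemma mem_GOs_of_first_arrival_iff (hr : r ∈ Runs (gammaEmpty kin kout F) P) {m k : ℕ}
    {mv : Move kin kout} (hm : 0 < m) (hfirst : ∀ j, m ≤ ((r 0).1.adv.arrive j).1)
    (hk : (r 0).1.adv.arrive k = (m, mv)) :
    k ∈ GOs r m ↔ P k ((), ⟨True, .inLane mv.1, mv.2⟩, m) = Act.go := by
  have hhead : ((r m).1.queue mv.1).head? = some k := by
    rw [runs_queue_eq_singleton hr hm hfirst hk]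
    rfl
  rw [mem_GOs_gammaEmpty_iff hr hhead, intentOf, runs_adv hr, hk]

lemma Pempty_eq_go_iff (hkin : 0 < kin) (O : Move kin kout → Move kin kout → Prop)
    {i t : ℕ} {l : Fin kin} {ii : Fin kout} :
    Pempty hkin O i ((), ⟨True, .inLane l, ii⟩, t) = Act.go ↔
      compatAll O (PosSet hkin O ∅ (nextL hkin t) l) (l, ii) := by
  simp [Pempty]

end GammaEmpty

section Correctness

variable (hkin : 0 < kin) (O : Move kin kout → Move kin kout → Prop)
  {F : Set (Adversary kin kout)}

theorem Pempty_validity : ValidityP (gammaEmpty kin kout F) (Pempty hkin O) :=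
  fun _ _ _ _ hg => hg.1

theorem Pempty_safety (hO : ∀ a b, O a b → O b a) :
    SafetyP O (gammaEmpty kin kout F) (Pempty hkin O) := by
  intro r hr m i j hij hgi hgj mi mj hmi hmj
  obtain ⟨li, hli⟩ := hgi.1
  obtain ⟨lj, hlj⟩ := hgj.1
  have hinv := runs_queueInv hr m
  rw [hinv.moveAt_of_head hli, Option.some_inj] at hmi
  rw [hinv.moveAt_of_head hlj, Option.some_inj] at hmj
  subst hmi hmj
  have hne : li ≠ lj := by
    rintro rfl
    exact hij (Option.some_inj.1 (hli.symm.trans hlj))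
  exact compat_of_compatAll_PosSet hkin hO _ hne
    ((Pempty_eq_go_iff hkin O).1 ((mem_GOs_gammaEmpty_iff hr hli).1 hgi))
    ((Pempty_eq_go_iff hkin O).1 ((mem_GOs_gammaEmpty_iff hr hlj).1 hgj))

theorem Pempty_liveness : LivenessP (gammaEmpty kin kout F) (Pempty hkin O) := by
  intro r hr m i ⟨l, hl⟩
  by_contra! hnever
  have hstay : ∀ n ≥ m, ((r n).1.queue l).head? = some i := by
    refine Nat.le_induction hl fun n hn ih => ?_
    have hng : Pempty hkin O i ((r n).2 i) ≠ Act.go :=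
      fun hgo => hnever n hn ((goingAt_iff hr).2 ⟨⟨l, ih⟩, hgo⟩)
    rw [hr.2 n]
    exact head_step_of_ne_go ih hng
  obtain ⟨m', hm', hmod⟩ : ∃ m' ≥ m, m' % kin = l.val :=
    ⟨kin * (m / kin + 1) + l, by nlinarith [Nat.div_add_mod m kin, Nat.mod_lt m hkin],
      by rw [Nat.mul_add_mod, Nat.mod_eq_of_lt l.isLt]⟩
  have hnext : nextL hkin m' = l := Fin.ext hmod
  refine hnever m' hm' ((mem_GOs_gammaEmpty_iff hr (hstay m' hm')).2 ?_)
  rw [Pempty_eq_go_iff, hnext, PosSet_self]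
  exact fun _ h => h.elim

theorem Pempty_isIntersectionProtocol (hO : ∀ a b, O a b → O b a) :
    IsIntersectionProtocol O (gammaEmpty kin kout F) (Pempty hkin O) :=
  ⟨Pempty_validity hkin O, Pempty_safety hkin O hO, Pempty_liveness hkin O⟩

end Correctness

def pairAdversary (m i : ℕ) (a b : Move kin kout) (hab : a.1 ≠ b.1) : Adversary kin kout where
  arrive k := if k = i then (m, a) else if k = i + 1 then (m, b) else (m + 1 + k, a)
  conflictFree j k hjk := by
    split_ifs <;> simp_all <;> omega
  T := Set.univ
  T_front _ _ := trivial
  Ft _ _ := true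
  Fr _ _ := true

section PairAdversary

variable {m i : ℕ} {a b : Move kin kout} {hab : a.1 ≠ b.1}

lemma pairAdversary_mem_NFadv : pairAdversary m i a b hab ∈ NFadv kin kout :=
  fun _ _ => ⟨rfl, rfl⟩

lemma le_pairAdversary_arrive (k : ℕ) : m ≤ ((pairAdversary m i a b hab).arrive k).1 := by
  simp only [pairAdversary]
  split_ifs <;> dsimp only <;> omega

lemma pairAdversary_arrive_left : (pairAdversary m i a b hab).arrive i = (m, a) := by
  simp [pairAdversary]

lemma pairAdversary_arrive_right : (pairAdversary m i a b hab).arrive (i + 1) = (m, b) := by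
  simp [pairAdversary]

end PairAdversary

lemma LexDominates.ssubset_of_eq_of_lt {C : Ctx kin kout Mem Extra Msg}
    {P P' : Prot kin kout Mem Extra} (hLD : LexDominates C P P') {r r' : Run kin kout Mem Extra}
    (hr : r ∈ Runs C P) (hr' : r' ∈ Runs C P') (h0 : r 0 = r' 0) {m : ℕ}
    (hbefore : ∀ k < m, GOs r k = GOs r' k) (hne : GOs r m ≠ GOs r' m) :
    GOs r' m ⊂ GOs r m := by
  rcases hLD r hr r' hr' h0 with hall | ⟨m₀, heq, hne₀, hss⟩
  · exact absurd (hall m) hne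
  · rcases lt_trichotomy m₀ m with hlt | rfl | hlt
    · exact absurd (hbefore m₀ hlt) hne₀
    · exact hss
    · exact absurd (heq m hlt) hne

section Optimality

variable {hkin : 0 < kin} {O : Move kin kout → Move kin kout → Prop}
  {F : Set (Adversary kin kout)} {P' : Prot kin kout Unit ℕ}

theorem compatAll_PosSet_of_lexDominates_Pempty (hNF : NFadv kin kout ⊆ F)
    (hsafe : SafetyP O (gammaEmpty kin kout F) P')
    (hLD : LexDominates (gammaEmpty kin kout F) P' (Pempty hkin O))
    {m i : ℕ} (hm : 0 < m) {l : Fin kin} {ii : Fin kout}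
    (hgo : P' i ((), ⟨True, .inLane l, ii⟩, m) = Act.go) :
    compatAll O (PosSet hkin O ∅ (nextL hkin m) l) (l, ii) := by
  by_contra hnc
  obtain ⟨mv, hmv, hconf⟩ : ∃ mv ∈ PosSet hkin O ∅ (nextL hkin m) l, ¬ O (l, ii) mv := by
    simpa [compatAll] using hnc
  obtain ⟨hlt, hmv_go⟩ := (mem_PosSet_empty_iff hkin O).1 hmv
  have hlane : (l, ii).1 ≠ mv.1 := fun h => (h ▸ hlt).false
  set α := pairAdversary m i (l, ii) mv hlane
  have hfirst : ∀ k, m ≤ (α.arrive k).1 := le_pairAdversary_arrive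
  have hleft : α.arrive i = (m, (l, ii)) := pairAdversary_arrive_left
  have hright : α.arrive (i + 1) = (m, mv) := pairAdversary_arrive_right
  have hα : α ∈ (gammaEmpty kin kout F).adv := hNF pairAdversary_mem_NFadv
  have hr := runFrom_mem P' hα
  have hr₀ := runFrom_mem (Pempty hkin O) hα
  have hi : i ∈ GOs (runFrom _ P' α) m := (mem_GOs_of_first_arrival_iff hr hm hfirst hleft).2 hgo
  have hi₀ : i ∉ GOs (runFrom _ (Pempty hkin O) α) m := fun h =>
    hconf ((Pempty_eq_go_iff hkin O).1
      ((mem_GOs_of_first_arrival_iff hr₀ hm hfirst hleft).1 h) mv hmv)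
  have hj₀ : i + 1 ∈ GOs (runFrom _ (Pempty hkin O) α) m :=
    (mem_GOs_of_first_arrival_iff hr₀ hm hfirst hright).2 ((Pempty_eq_go_iff hkin O).2 hmv_go)
  have hbefore : ∀ k < m, GOs (runFrom _ P' α) k = GOs (runFrom _ (Pempty hkin O) α) k :=
    fun k hk => by
      rw [GOs_eq_empty_of_lt_arrive hr fun j => lt_of_lt_of_le hk (hfirst j),
        GOs_eq_empty_of_lt_arrive hr₀ fun j => lt_of_lt_of_le hk (hfirst j)]
  have hj : i + 1 ∈ GOs (runFrom _ P' α) m :=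
    (hLD.ssubset_of_eq_of_lt hr hr₀ rfl hbefore fun h => hi₀ (h ▸ hi)).subset hj₀
  exact hconf (hsafe _ hr m i (i + 1) (by omega) hi hj _ _
    (moveAt_of_first_arrival hr hm hfirst hleft) (moveAt_of_first_arrival hr hm hfirst hright))

theorem GOs_eq_of_lexDominates_Pempty (hNF : NFadv kin kout ⊆ F)
    (hsafe : SafetyP O (gammaEmpty kin kout F) P')
    (hLD : LexDominates (gammaEmpty kin kout F) P' (Pempty hkin O))
    {r' r : Run kin kout Unit ℕ} (hr' : r' ∈ Runs (gammaEmpty kin kout F) P')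
    (hr : r ∈ Runs (gammaEmpty kin kout F) (Pempty hkin O)) (h0 : r' 0 = r 0) (m : ℕ) :
    GOs r' m = GOs r m := by
  induction m using Nat.strong_induction_on with
  | _ m ih =>
    by_contra hne
    obtain ⟨i, hi', hi⟩ := Set.exists_of_ssubset (hLD.ssubset_of_eq_of_lt hr' hr h0 ih hne)
    obtain ⟨l, hl'⟩ := hi'.1
    have he := env_eq_of_GOs_eq hr' hr h0 ih
    have hm : 0 < m := Nat.pos_of_ne_zero fun h => runs_not_frontAt_zero hr' i (h ▸ hi'.1)
    have hl : ((r m).1.queue l).head? = some i := he ▸ hl'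
    apply hi
    rw [mem_GOs_gammaEmpty_iff hr hl, Pempty_eq_go_iff, ← he]
    exact compatAll_PosSet_of_lexDominates_Pempty hNF hsafe hLD hm
      ((mem_GOs_gammaEmpty_iff hr' hl').1 hi')

theorem Pempty_lexOptimal (hNF : NFadv kin kout ⊆ F) :
    LexOptimal O (gammaEmpty kin kout F) (Pempty hkin O) := by
  rintro ⟨P', ⟨-, hsafe, -⟩, hLD, hnot⟩
  exact hnot fun r hr r' hr' h0 => Or.inl fun m =>
    (GOs_eq_of_lexDominates_Pempty hNF hsafe hLD hr' hr h0.symm m).symm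

end Optimality

end Inter

/-- `P^∅` is an intersection protocol (Validity, Safety, Liveness) and is
lexicographically optimal with respect to `γ_∅(F)` for each `F ∈ {NF, CR, SO}`. -/
theorem Pempty_intersection_protocol_and_lex_optimal
    {kin kout : ℕ} (hkin : 0 < kin)
    (O : Move kin kout → Move kin kout → Prop)
    (hO : ∀ a b, O a b → O b a) :
    ∀ F ∈ ({NFadv kin kout, CRadv kin kout, SOadv kin kout} :
        Set (Set (Adversary kin kout))),
      IsIntersectionProtocol O (gammaEmpty kin kout F) (Pempty hkin O) ∧
      LexOptimal O (gammaEmpty kin kout F) (Pempty hkin O) := by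
  intro F hF
  have hNF : NFadv kin kout ⊆ F := by
    rcases hF with rfl | rfl | rfl
    · exact subset_rfl
    · exact fun α hα => ⟨fun k i => (hα k i).2, fun k i hk => absurd (hα k i).1 (by simp [hk])⟩
    · exact fun α hα k i => (hα k i).2
  exact ⟨Pempty_isIntersectionProtocol hkin O hO, Pempty_lexOptimal hNF⟩
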